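/- Let α > 0 and suppose (a_n) and (b_n) are sequences with n·a_n → ∞ and b_n → 0. Set R_n = 2·log(n/ν) for fixed ν > 0. Then uniformly for r ∈ [a_n, b_n] and y ∈ [R_n − r, R_n), the quantity (cosh(r)cosh(y) − cosh(R_n))/(sinh(r)sinh(y)) equals −(R_n − y)/r + O(r) as n → ∞. -/

import Mathlib

open Real Filter

/-!
Write `R = y + t` with `0 < t ≤ r`. The addition formula for `cosh (y + t)` splits the quantity
into `(cosh r - cosh t) / sinh r * coth y + (t / r - sinh t / sinh r)`. For `r ≤ 1` the first
factor is at most `(cosh r - 1) / sinh r ≤ r² / r`, and `coth y ≤ 2` as soon as `y ≥ 1`; the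
second term is at most `t ≤ r` because `0 ≤ sinh x - x ≤ x²`. Since `R_n → ∞` and `b_n → 0`,
these conditions hold for all large `n`, with `C = 3`.
-/

/-- Radius of the random hyperbolic graph: `R_n = 2 log(n/ν)`. -/
noncomputable def Rn (ν : ℝ) (n : ℕ) : ℝ := 2 * Real.log (n / ν)

namespace Real

theorem cosh_sub_one_le_sq {x : ℝ} (hx : |x| ≤ 1) : cosh x - 1 ≤ x ^ 2 := by
  have hpos := abs_le.1 (abs_exp_sub_one_sub_id_le hx)
  have hneg := abs_le.1 (abs_exp_sub_one_sub_id_le (x := -x) (by rwa [abs_neg]))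
  rw [cosh_eq]
  nlinarith [hpos.2, hneg.2]

theorem abs_sinh_sub_self_le_sq {x : ℝ} (hx : |x| ≤ 1) : |sinh x - x| ≤ x ^ 2 := by
  have hpos := abs_le.1 (abs_exp_sub_one_sub_id_le hx)
  have hneg := abs_le.1 (abs_exp_sub_one_sub_id_le (x := -x) (by rwa [abs_neg]))
  rw [sinh_eq, abs_le]
  constructor <;> nlinarith [hpos.1, hpos.2, hneg.1, hneg.2]

theorem cosh_le_two_mul_sinh {y : ℝ} (hy : 1 ≤ y) : cosh y ≤ 2 * sinh y := by
  have h3 : 3 ≤ exp y * exp y := by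
    rw [← exp_add]
    linarith [add_one_le_exp (y + y)]
  have hinv : exp (-y) * exp y = 1 := by rw [← exp_add, neg_add_cancel, exp_zero]
  rw [cosh_eq, sinh_eq]
  nlinarith [exp_pos (-y)]

end Real

theorem abs_div_sub_sinh_div_sinh_le {t r : ℝ} (ht : 0 < t) (htr : t ≤ r) (hr : r ≤ 1) :
    |t / r - sinh t / sinh r| ≤ t := by
  have hr0 : 0 < r := ht.trans_le htr
  have hsr : r ≤ sinh r := self_le_sinh_iff.2 hr0.le
  have hden : 0 < r * sinh r := mul_pos hr0 (hr0.trans_le hsr)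
  have et := abs_le.1 (abs_sinh_sub_self_le_sq (x := t) (by rw [abs_of_pos ht]; linarith))
  have er := abs_le.1 (abs_sinh_sub_self_le_sq (x := r) (by rw [abs_of_pos hr0]; linarith))
  -- with `sinh x = x + e x`, the numerator `t sinh r - r sinh t` is `t e r - r e t`
  have hnum : |t * sinh r - r * sinh t| ≤ t * r ^ 2 := by
    rw [abs_le]
    constructor <;> nlinarith [self_le_sinh_iff.2 ht.le, mul_le_mul_of_nonneg_left htr ht.le]
  rw [div_sub_div _ _ hr0.ne' (hr0.trans_le hsr).ne', abs_div, abs_of_pos hden,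
    div_le_iff₀ hden]
  nlinarith [mul_le_mul_of_nonneg_left hsr (mul_pos ht hr0).le]

theorem cosh_mul_cosh_sub_cosh_add_div_add_eq {r y t : ℝ} (hr : r ≠ 0) (hsr : sinh r ≠ 0)
    (hsy : sinh y ≠ 0) :
    (cosh r * cosh y - cosh (y + t)) / (sinh r * sinh y) + t / r =
      (cosh r - cosh t) / sinh r * (cosh y / sinh y) + (t / r - sinh t / sinh r) := by
  rw [cosh_add]
  field_simp
  ring

theorem cosh_sub_cosh_div_sinh_le {r : ℝ} (t : ℝ) (hr0 : 0 < r) (hr : r ≤ 1) :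
    (cosh r - cosh t) / sinh r ≤ r := by
  rw [div_le_iff₀ (sinh_pos_iff.2 hr0)]
  nlinarith [cosh_sub_one_le_sq (x := r) (by rw [abs_of_pos hr0]; linarith), one_le_cosh t,
    self_le_sinh_iff.2 hr0.le]

theorem abs_cosh_mul_cosh_sub_cosh_div_add_le {r y R : ℝ} (hr : r ≤ 1) (hR : 2 ≤ R)
    (hy : y ∈ Set.Ico (R - r) R) :
    |(cosh r * cosh y - cosh R) / (sinh r * sinh y) + (R - y) / r| ≤ 3 * r := by
  obtain ⟨t, rfl⟩ : ∃ t, R = y + t := ⟨R - y, by ring⟩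
  obtain ⟨hyl, hyr⟩ := hy
  have hr0 : 0 < r := by linarith
  have ht : 0 < t := by linarith
  have htr : t ≤ r := by linarith
  have hsr : 0 < sinh r := sinh_pos_iff.2 hr0
  have hsy : 0 < sinh y := sinh_pos_iff.2 (by linarith)
  have hcoth : cosh y / sinh y ≤ 2 := (div_le_iff₀ hsy).2 (cosh_le_two_mul_sinh (by linarith))
  have hcosh : 0 ≤ (cosh r - cosh t) / sinh r :=
    div_nonneg (sub_nonneg.2 (cosh_le_cosh.2 (by rw [abs_of_pos ht, abs_of_pos hr0]; exact htr)))
      hsr.le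
  rw [add_sub_cancel_left, cosh_mul_cosh_sub_cosh_add_div_add_eq hr0.ne' hsr.ne' hsy.ne']
  calc _ ≤ |(cosh r - cosh t) / sinh r * (cosh y / sinh y)| + |t / r - sinh t / sinh r| :=
        abs_add_le _ _
    _ ≤ r * 2 + t := by
      rw [abs_of_nonneg (mul_nonneg hcosh (div_pos (cosh_pos y) hsy).le)]
      gcongr
      · exact cosh_sub_cosh_div_sinh_le t hr0 hr
      · exact abs_div_sub_sinh_div_sinh_le ht htr hr
    _ ≤ 3 * r := by linarith

theorem tendsto_Rn_atTop {ν : ℝ} (hν : 0 < ν) : Tendsto (Rn ν) atTop atTop :=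
  (tendsto_log_atTop.comp
    (tendsto_natCast_atTop_atTop.atTop_div_const hν)).const_mul_atTop two_pos

theorem stmt_15_general (ν : ℝ) (hν : 0 < ν) (a b : ℕ → ℝ)
    (hb : Tendsto b atTop (nhds 0)) :
    ∃ C > 0, ∃ N : ℕ, ∀ n ≥ N, ∀ r ∈ Set.Icc (a n) (b n),
      ∀ y ∈ Set.Ico (Rn ν n - r) (Rn ν n),
        |(Real.cosh r * Real.cosh y - Real.cosh (Rn ν n)) / (Real.sinh r * Real.sinh y)
            + (Rn ν n - y) / r| ≤ C * r := by
  obtain ⟨N, hN⟩ := eventually_atTop.1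
    ((hb.eventually (ge_mem_nhds one_pos)).and ((tendsto_Rn_atTop hν).eventually_ge_atTop 2))
  refine ⟨3, three_pos, N, fun n hn r hr y hy => ?_⟩
  obtain ⟨hb1, hR⟩ := hN n hn
  exact abs_cosh_mul_cosh_sub_cosh_div_add_le (hr.2.trans hb1) hR hy

/-- Uniform estimate of the cosine of the half angular width for small radii: if
`n·a_n → ∞` and `b_n → 0`, then uniformly for `r ∈ [a_n,b_n]` and `y ∈ [R_n − r, R_n)`,
`(cosh r cosh y − cosh R_n)/(sinh r sinh y) = −(R_n − y)/r + O(r)`. -/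
theorem stmt_15 (α ν : ℝ) (hα : 0 < α) (hν : 0 < ν) (a b : ℕ → ℝ)
    (ha0 : ∀ n, 0 < a n) (hab : ∀ n, a n ≤ b n)
    (hna : Tendsto (fun n : ℕ => (n : ℝ) * a n) atTop atTop)
    (hb : Tendsto b atTop (nhds 0)) :
    ∃ C > 0, ∃ N : ℕ, ∀ n ≥ N, ∀ r ∈ Set.Icc (a n) (b n),
      ∀ y ∈ Set.Ico (Rn ν n - r) (Rn ν n),
        |(Real.cosh r * Real.cosh y - Real.cosh (Rn ν n)) / (Real.sinh r * Real.sinh y)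
            + (Rn ν n - y) / r| ≤ C * r :=
  stmt_15_general ν hν a b hb
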